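/- arXiv:2012.07839 — 5 statements merged into one kernel-verified Lean document; each statement's English description precedes it below -/
import Mathlib

section
/- Let ν ∈ ℕ₀, n ∈ L_ν, let I_1 := {i ∈ {1,...,ν} : c^{i-1}(n) is odd} and κ := |I_1|. Then, as an identity of rational numbers, n = (2^{ν-κ}/3^κ) · ∏_{i ∈ I_1} (c^i(n) - 1)/c^i(n). -/
/-!
Each Collatz step `m ↦ c m` rescales by an explicit factor: `m = 2 · c m` for even `m`, and
`m = (c m - 1) / (3 · c m) · c m` for odd `m`. Telescoping these identities along the orbit of `n`
down to `c^[ν] n = 1` writes `n` as a product with one factor per step; the even steps contribute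
`2^(ν-κ)` and the odd steps contribute `3^(-κ) ∏ (c^i(n) - 1) / c^i(n)`.
-/

/-- The Collatz function (on ℕ; positive integers are preserved). -/
def c (n : ℕ) : ℕ := if Even n then n / 2 else 3 * n + 1

/-- The level set `L ν`: positive integers whose Collatz orbit first reaches 1 after exactly ν steps. -/
def L (ν : ℕ) : Set ℕ := {n | 0 < n ∧ c^[ν] n = 1 ∧ ∀ i < ν, c^[i] n ≠ 1}

open Finset

theorem Function.eq_prod_range_mul_iterate {α M : Type*} [CommMonoid M] {T : α → α} {φ r : α → M}
    (h : ∀ x, φ x = r x * φ (T x)) (x : α) (k : ℕ) :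
    φ x = (∏ i ∈ range k, r (T^[i] x)) * φ (T^[k] x) := by
  induction k with
  | zero => simp
  | succ k ih =>
    rw [ih, prod_range_succ, mul_assoc, Function.iterate_succ_apply', ← h]

theorem prod_ite_div_const {ι K : Type*} [Field K] (s : Finset ι) (p : ι → Prop) [DecidablePred p]
    (f : ι → K) (a b : K) :
    ∏ i ∈ s, (if p i then f i / a else b) =
      b ^ (#s - #(s.filter p)) / a ^ #(s.filter p) * ∏ i ∈ s.filter p, f i := by
  have hcard : #(s.filter fun i => ¬p i) = #s - #(s.filter p) := by
    have := card_filter_add_card_filter_not (s := s) p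
    omega
  rw [prod_ite, prod_div_distrib, prod_const, prod_const, hcard]
  ring

theorem c_of_even {m : ℕ} (hm : Even m) : c m = m / 2 := if_pos hm

theorem c_of_odd {m : ℕ} (hm : Odd m) : c m = 3 * m + 1 := if_neg (Nat.not_even_iff_odd.2 hm)

theorem cast_eq_ite_mul_c (m : ℕ) :
    (m : ℚ) = (if Odd m then ((c m : ℚ) - 1) / c m / 3 else 2) * c m := by
  split_ifs with hm
  · rw [c_of_odd hm]
    push_cast
    field_simp
    ring
  · obtain ⟨k, rfl⟩ := Nat.not_odd_iff_even.1 hm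
    rw [c_of_even ⟨k, rfl⟩, ← two_mul, Nat.mul_div_cancel_left k two_pos]
    push_cast
    ring

theorem cast_eq_prod_Icc_of_iterate_c_eq_one {ν n : ℕ} (h : c^[ν] n = 1) :
    (n : ℚ) = ∏ i ∈ Icc 1 ν,
      (if Odd (c^[i - 1] n) then ((c^[i] n : ℚ) - 1) / c^[i] n / 3 else 2) := by
  have htele := Function.eq_prod_range_mul_iterate (φ := fun m : ℕ => (m : ℚ)) cast_eq_ite_mul_c n ν
  simp only [h, Nat.cast_one, mul_one, ← Function.iterate_succ_apply' c] at htele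
  rw [htele, ← Finset.Ico_add_one_right_eq_Icc, prod_Ico_eq_prod_range]
  simp only [Nat.add_sub_cancel, add_comm 1]

/-- for `n ∈ L ν`, with `I₁` the set of odd-step indices and `κ = |I₁|`,
`n = (2^{ν-κ}/3^κ) · ∏_{i ∈ I₁} (c^i(n) - 1)/c^i(n)` as rational numbers. -/
theorem stmt_10 (ν : ℕ) (n : ℕ) (hn : n ∈ L ν)
    (I₁ : Finset ℕ) (hI₁ : I₁ = (Finset.Icc 1 ν).filter fun i => Odd (c^[i - 1] n))
    (κ : ℕ) (hκ : κ = I₁.card) :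
    (n : ℚ) = 2 ^ (ν - κ) / 3 ^ κ * ∏ i ∈ I₁, ((c^[i] n : ℚ) - 1) / (c^[i] n : ℚ) := by
  rw [cast_eq_prod_Icc_of_iterate_c_eq_one hn.2.1, prod_ite_div_const, Nat.card_Icc,
    Nat.add_sub_cancel, ← hI₁, ← hκ]
end

section
/- Let ν ∈ ℕ₀, n ∈ L_ν, and let κ := |{i ∈ {1,...,ν} : c^{i-1}(n) is odd}|. Then 6^κ · n ≤ 2^ν, i.e., n ≤ 2^ν/6^κ. -/
/-!
An even step halves `n` and an odd step multiplies it by at most `6/2`, since `6 n ≤ 2 (3 n + 1)`.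
So along any orbit `6 ^ κ * n ≤ 2 ^ ν * c^[ν] n`, where `κ` counts the odd steps among the first `ν`;
for `n ∈ L ν` the right-hand side is `2 ^ ν`.
-/

def oddSteps (ν n : ℕ) : ℕ := ((Finset.range ν).filter fun i => Odd (c^[i] n)).card

lemma oddSteps_succ (ν n : ℕ) :
    oddSteps (ν + 1) n = oddSteps ν (c n) + if Odd n then 1 else 0 := by
  simp only [oddSteps, Finset.card_filter, Finset.sum_range_succ', Function.iterate_succ_apply,
    Function.iterate_zero_apply]
  rfl

lemma card_filter_Icc_odd_iterate_pred (ν n : ℕ) :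
    ((Finset.Icc 1 ν).filter fun i => Odd (c^[i - 1] n)).card = oddSteps ν n := by
  refine Finset.card_nbij' (· - 1) (· + 1) ?_ ?_ ?_ ?_ <;> intro i hi <;>
    simp only [Finset.coe_filter, Finset.mem_Icc, Finset.mem_range, Set.mem_ofPred_eq,
      add_tsub_cancel_right] at hi ⊢
  · exact ⟨by omega, hi.2⟩
  · exact ⟨⟨by omega, by omega⟩, hi.2⟩
  · omega

lemma six_pow_mul_le_two_mul_c (n : ℕ) : 6 ^ (if Odd n then 1 else 0) * n ≤ 2 * c n := by
  rcases Nat.even_or_odd n with hn | hn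
  · simp [c, hn, Nat.not_odd_iff_even.mpr hn, Nat.mul_div_cancel' (even_iff_two_dvd.mp hn)]
  · simp [c, hn, Nat.not_even_iff_odd.mpr hn]
    omega

lemma six_pow_oddSteps_mul_le (ν n : ℕ) : 6 ^ oddSteps ν n * n ≤ 2 ^ ν * c^[ν] n := by
  induction ν generalizing n with
  | zero => simp [oddSteps]
  | succ ν ih =>
    calc 6 ^ oddSteps (ν + 1) n * n
        = 6 ^ oddSteps ν (c n) * (6 ^ (if Odd n then 1 else 0) * n) := by
          rw [oddSteps_succ, pow_add, mul_assoc]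
      _ ≤ 6 ^ oddSteps ν (c n) * (2 * c n) :=
          Nat.mul_le_mul_left _ (six_pow_mul_le_two_mul_c n)
      _ = 2 * (6 ^ oddSteps ν (c n) * c n) := by ring
      _ ≤ 2 * (2 ^ ν * c^[ν] (c n)) := Nat.mul_le_mul_left _ (ih (c n))
      _ = 2 ^ (ν + 1) * c^[ν + 1] n := by rw [Function.iterate_succ_apply, pow_succ]; ring

/-- for `n ∈ L ν` with `κ` the number of odd steps, `6^κ · n ≤ 2^ν`. -/
theorem stmt_11 (ν : ℕ) (n : ℕ) (hn : n ∈ L ν)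
    (κ : ℕ) (hκ : κ = ((Finset.Icc 1 ν).filter fun i => Odd (c^[i - 1] n)).card) :
    6 ^ κ * n ≤ 2 ^ ν := by
  have h := six_pow_oddSteps_mul_le ν n
  rwa [hn.2.1, mul_one, ← card_filter_Icc_odd_iterate_pred, ← hκ] at h
end

section
/- Let ν ∈ ℕ₀, n ∈ L_ν, and let κ := |{i ∈ {1,...,ν} : c^{i-1}(n) is odd}|. Then 6^κ ≤ 2^ν. -/
/-!
An odd step `m ↦ 3m + 1` multiplies by more than 3 and an even step `m ↦ m / 2` by exactly `1/2`,
so along `ν` steps with `κ` odd ones, `c^[ν] n ≥ 3^κ n / 2^(ν - κ)`, i.e. `6^κ n ≤ 2^ν c^[ν] n`.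
For `n ∈ L ν` the right side is `2^ν` and `n ≥ 1`.
-/

namespace Collatz

lemma two_mul_c_of_even {m : ℕ} (h : Even m) : 2 * c m = m := by
  rw [c, if_pos h, Nat.two_mul_div_two_of_even h]

lemma six_mul_le_two_mul_c_of_odd {m : ℕ} (h : Odd m) : 6 * m ≤ 2 * c m := by
  rw [c, if_neg (Nat.not_even_iff_odd.mpr h)]
  omega

/-- The paper's `κ`: the number of odd values among `n, c n, …, c^[ν - 1] n`. -/
def oddSteps (n ν : ℕ) : ℕ := ((Finset.Icc 1 ν).filter fun i => Odd (c^[i - 1] n)).card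

lemma oddSteps_succ (n ν : ℕ) :
    oddSteps n (ν + 1) = oddSteps n ν + if Odd (c^[ν] n) then 1 else 0 := by
  rw [oddSteps, ← Finset.insert_Icc_right_eq_Icc_add_one (by omega), Finset.filter_insert,
    Nat.add_sub_cancel]
  split_ifs
  · rw [Finset.card_insert_of_notMem (by simp), oddSteps]
  · rfl

lemma six_pow_oddSteps_mul_le (n ν : ℕ) : 6 ^ oddSteps n ν * n ≤ 2 ^ ν * c^[ν] n := by
  induction ν with
  | zero => simp [oddSteps]
  | succ k ih =>
    rw [oddSteps_succ, Function.iterate_succ_apply', pow_succ 2, mul_assoc]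
    set m := c^[k] n
    rcases Nat.even_or_odd m with hm | hm
    · rwa [if_neg (Nat.not_odd_iff_even.mpr hm), add_zero, two_mul_c_of_even hm]
    · rw [if_pos hm, pow_succ, mul_right_comm]
      calc 6 ^ oddSteps n k * n * 6 ≤ 2 ^ k * m * 6 := Nat.mul_le_mul_right 6 ih
        _ = 2 ^ k * (6 * m) := by ring
        _ ≤ 2 ^ k * (2 * c m) := Nat.mul_le_mul_left _ (six_mul_le_two_mul_c_of_odd hm)

end Collatz

/-- for `n ∈ L ν` with `κ` the number of odd steps, `6^κ ≤ 2^ν`. -/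
theorem stmt_12 (ν : ℕ) (n : ℕ) (hn : n ∈ L ν)
    (κ : ℕ) (hκ : κ = ((Finset.Icc 1 ν).filter fun i => Odd (c^[i - 1] n)).card) :
    6 ^ κ ≤ 2 ^ ν := by
  obtain ⟨hpos, hreach, -⟩ := hn
  have key := Collatz.six_pow_oddSteps_mul_le n ν
  rw [hreach, mul_one] at key
  calc 6 ^ κ ≤ 6 ^ κ * n := Nat.le_mul_of_pos_right _ hpos
    _ ≤ 2 ^ ν := hκ ▸ key
end

section
/- Let ν ∈ ℕ₀, n ∈ L_ν, and let I_1 := {i ∈ {1,...,ν} : c^{i-1}(n) is odd}. Then the map i ↦ c^i(n) is injective on I_1, its image is contained in the set {k ∈ R(n) : k ≡ 4 (mod 6)} (which is finite), and consequently ∏_{i ∈ I_1} (c^i(n) - 1)/c^i(n) ≥ σ(n), where σ(n) := ∏_{k ∈ R(n), k ≡ 4 (mod 6)} (k-1)/k. -/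
def R (n : ℕ) : Set ℕ := {k | ∃ i : ℕ, c^[i] n = k}

noncomputable def σ (n : ℕ) : ℝ := ∏ᶠ k ∈ {k ∈ R n | k % 6 = 4}, ((k : ℝ) - 1) / k

def 𝔠 : Set ℕ := ⋃ ν : ℕ, L ν

noncomputable def σ₀ : ℝ := sInf (σ '' 𝔠)

noncomputable def S (ν κ : ℕ) : Set ℝ := Set.Icc (σ₀ * 2 ^ ν / 6 ^ κ) (2 ^ ν / 6 ^ κ)

namespace Function

variable {α : Type*} {f : α → α} {x y : α} {m p ν : ℕ}

theorem iterate_mem_image_range_of_isPeriodicPt (hp : IsPeriodicPt f p (f^[m] x)) (hp0 : 0 < p)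
    (i : ℕ) : f^[i] x ∈ (fun j => f^[j] x) '' Set.Iio (m + p) := by
  by_cases hi : i < m + p
  · exact ⟨i, hi, rfl⟩
  refine ⟨(i - m) % p + m, ?_, ?_⟩
  · have := Nat.mod_lt (i - m) hp0
    rw [Set.mem_Iio]
    omega
  calc f^[(i - m) % p + m] x = f^[(i - m) % p] (f^[m] x) := iterate_add_apply f _ m x
    _ = f^[i - m] (f^[m] x) := hp.iterate_mod_apply _
    _ = f^[i] x := by rw [← iterate_add_apply, Nat.sub_add_cancel (by omega)]

theorem finite_range_iterate_of_isPeriodicPt (hp : IsPeriodicPt f p (f^[m] x)) (hp0 : 0 < p) :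
    (Set.range fun i => f^[i] x).Finite :=
  ((Set.finite_Iio (m + p)).image _).subset <| Set.range_subset_iff.2 <|
    iterate_mem_image_range_of_isPeriodicPt hp hp0

theorem injOn_iterate_Iic_of_first_hit (hν : f^[ν] x = y) (hfirst : ∀ i < ν, f^[i] x ≠ y) :
    Set.InjOn (fun i => f^[i] x) (Set.Iic ν) := by
  have hne : ∀ i j, j ≤ ν → i < j → f^[i] x ≠ f^[j] x := fun i j hj hij heq =>
    hfirst (ν - j + i) (by omega) <| by
      rw [iterate_add_apply, heq, ← iterate_add_apply, Nat.sub_add_cancel hj, hν]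
  intro i hi j hj heq
  rcases lt_trichotomy i j with hij | hij | hij
  · exact absurd heq (hne i j hj hij)
  · exact hij
  · exact absurd heq.symm (hne j i hi hij)

end Function

theorem c_mod_six_of_odd {m : ℕ} (hm : Odd m) : c m % 6 = 4 := by
  rw [c, if_neg (Nat.not_even_iff_odd.2 hm)]
  have := Nat.odd_iff.1 hm
  omega

theorem isPeriodicPt_c_three_one : Function.IsPeriodicPt c 3 1 := by
  decide

theorem finite_R_of_mem_L {ν n : ℕ} (hn : n ∈ L ν) : (R n).Finite := by
  have hp : Function.IsPeriodicPt c 3 (c^[ν] n) := hn.2.1 ▸ isPeriodicPt_c_three_one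
  exact Function.finite_range_iterate_of_isPeriodicPt hp three_pos

theorem div_self_sub_one_mem_Icc {k : ℕ} (hk : k ≠ 0) : ((k : ℝ) - 1) / k ∈ Set.Icc 0 1 := by
  have hk1 : (1 : ℝ) ≤ k := by exact_mod_cast Nat.one_le_iff_ne_zero.2 hk
  exact ⟨div_nonneg (by linarith) (by linarith), (div_le_one (by linarith)).2 (by linarith)⟩

theorem iterate_succ_mem_of_odd {n j : ℕ} (hodd : Odd (c^[j] n)) :
    c^[j + 1] n ∈ {k ∈ R n | k % 6 = 4} := by
  refine ⟨⟨j + 1, rfl⟩, ?_⟩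
  rw [Function.iterate_succ_apply']
  exact c_mod_six_of_odd hodd

theorem σ_le_prod_of_subset {n : ℕ} (hfin : {k ∈ R n | k % 6 = 4}.Finite) {T : Finset ℕ}
    (hT : ↑T ⊆ {k ∈ R n | k % 6 = 4}) : σ n ≤ ∏ k ∈ T, ((k : ℝ) - 1) / k := by
  have hfactor : ∀ k ∈ hfin.toFinset, ((k : ℝ) - 1) / k ∈ Set.Icc 0 1 := fun k hk =>
    div_self_sub_one_mem_Icc (by have := (hfin.mem_toFinset.1 hk).2; omega)
  rw [σ, finprod_mem_eq_finite_toFinset_prod _ hfin]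
  exact Finset.prod_le_prod_of_subset_of_le_one (fun k hk => hfin.mem_toFinset.2 (hT hk))
    (fun k hk => (hfactor k hk).1) (fun k hk _ => (hfactor k hk).2)

/-- for `n ∈ L ν` and `I₁` the set of odd-step indices, `i ↦ c^i(n)` is
injective on `I₁`, its image lies in the finite set `{k ∈ R n : k ≡ 4 (mod 6)}`, and
`∏_{i ∈ I₁} (c^i(n) - 1)/c^i(n) ≥ σ(n)`. -/
theorem stmt_14 (ν : ℕ) (n : ℕ) (hn : n ∈ L ν)
    (I₁ : Finset ℕ) (hI₁ : I₁ = (Finset.Icc 1 ν).filter fun i => Odd (c^[i - 1] n)) :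
    Set.InjOn (fun i => c^[i] n) ↑I₁ ∧
    (∀ i ∈ I₁, c^[i] n ∈ {k ∈ R n | k % 6 = 4}) ∧
    {k ∈ R n | k % 6 = 4}.Finite ∧
    σ n ≤ ∏ i ∈ I₁, ((c^[i] n : ℝ) - 1) / (c^[i] n : ℝ) := by
  have hI₁_mem : ∀ i ∈ I₁, i ≤ ν ∧ ∃ j, i = j + 1 ∧ Odd (c^[j] n) := by
    intro i hi
    rw [hI₁, Finset.mem_filter, Finset.mem_Icc] at hi
    exact ⟨hi.1.2, i - 1, by omega, hi.2⟩
  have hinj : Set.InjOn (fun i => c^[i] n) I₁ :=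
    (Function.injOn_iterate_Iic_of_first_hit hn.2.1 hn.2.2).mono fun i hi => (hI₁_mem i hi).1
  have hmem : ∀ i ∈ I₁, c^[i] n ∈ {k ∈ R n | k % 6 = 4} := fun i hi => by
    obtain ⟨-, j, rfl, hodd⟩ := hI₁_mem i hi
    exact iterate_succ_mem_of_odd hodd
  have hfin : {k ∈ R n | k % 6 = 4}.Finite := (finite_R_of_mem_L hn).subset fun k hk => hk.1
  refine ⟨hinj, hmem, hfin, ?_⟩
  rw [← Finset.prod_image (f := fun k : ℕ => ((k : ℝ) - 1) / k) fun i hi j hj => hinj hi hj]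
  refine σ_le_prod_of_subset hfin fun k hk => ?_
  obtain ⟨i, hi, rfl⟩ := Finset.mem_image.1 hk
  exact hmem i hi
end

section
/- For every ν ∈ ℕ₀ and every n ∈ L_ν, there exists κ ∈ ℕ₀ such that σ₀ · 2^ν/6^κ ≤ n ≤ 2^ν/6^κ; that is, each level set is covered by the slots: L_ν ⊆ ⋃_{κ ∈ ℕ₀} S_{ν,κ}. -/
/-!
Follow the orbit `n = n₀, …, n_ν = 1` backwards. A halving step `n_i = 2 n_{i+1}` contributes a
factor `2`, and an odd step `n_i = m ↦ k = 3m + 1 = n_{i+1}` gives `m = (2 / 6) · ((k - 1) / k) · k`.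
Hence `n = 2^ν / 6^κ · ∏ (k - 1) / k`, where `κ` counts the odd steps and `k` runs over the values
they reach. These are `≡ 4 mod 6`, and pairwise distinct because the orbit cannot revisit a point
before it first reaches `1`. So the product runs over a subset of the factors of `σ n`, all of
which lie in `[0, 1]`: it is at most `1` and at least `σ n ≥ σ₀`.
-/

open Function

lemma isPeriodicPt_c_three_one_s17 : IsPeriodicPt c 3 1 := by decide

lemma R_finite_of_iterate_eq_one {ν n : ℕ} (h : c^[ν] n = 1) : (R n).Finite := by
  refine ((Set.finite_Iio (ν + 3)).image (c^[·] n)).subset ?_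
  rintro _ ⟨i, rfl⟩
  rcases lt_or_ge i ν with hi | hi
  · exact ⟨i, by simp; omega, rfl⟩
  · obtain ⟨j, rfl⟩ := Nat.exists_eq_add_of_le hi
    refine ⟨ν + j % 3, by simp; omega, ?_⟩
    simp only [add_comm ν, iterate_add_apply, h, isPeriodicPt_c_three_one_s17.iterate_mod_apply]

lemma sub_one_div_self_mem_Icc (k : ℕ) : ((k : ℝ) - 1) / k ∈ Set.Icc 0 1 := by
  rcases k.eq_zero_or_pos with rfl | hk
  · simp
  · have hk : (1 : ℝ) ≤ k := by exact_mod_cast hk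
    exact ⟨div_nonneg (by linarith) (by linarith), (div_le_one (by linarith)).2 (by linarith)⟩

lemma σ_nonneg (n : ℕ) : 0 ≤ σ n :=
  finprod_cond_nonneg fun k _ => (sub_one_div_self_mem_Icc k).1

lemma σ₀_le_σ {n : ℕ} (hn : n ∈ 𝔠) : σ₀ ≤ σ n :=
  csInf_le ⟨0, by rintro _ ⟨m, -, rfl⟩; exact σ_nonneg m⟩ ⟨n, hn, rfl⟩

lemma σ_le_prod {n : ℕ} (hR : (R n).Finite) {A : Finset ℕ} (hA : ∀ k ∈ A, k ∈ R n ∧ k % 6 = 4) :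
    σ n ≤ ∏ k ∈ A, ((k : ℝ) - 1) / k := by
  have hB : {k ∈ R n | k % 6 = 4}.Finite := hR.subset fun k hk => hk.1
  rw [σ, finprod_mem_eq_finite_toFinset_prod _ hB]
  exact Finset.prod_anti_set_of_le_one (fun k => (sub_one_div_self_mem_Icc k).1)
    (fun k => (sub_one_div_self_mem_Icc k).2) fun k hk => by simpa using hA k hk

lemma iterate_succ_ne_self_of_lt {α : Type*} {f : α → α} {x y : α} {ν i : ℕ} (h : f^[ν] x = y)
    (hmin : ∀ j < ν, f^[j] x ≠ y) (hi : i < ν) : f^[i + 1] x ≠ x := by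
  intro hx
  apply hmin (ν - (i + 1)) (by omega)
  have := iterate_add_apply f (ν - (i + 1)) (i + 1) x
  rwa [hx, Nat.sub_add_cancel hi, h, eq_comm] at this

lemma exists_eq_two_pow_div_six_pow_mul_prod {ν n : ℕ} (h : c^[ν] n = 1)
    (hmin : ∀ i < ν, c^[i] n ≠ 1) :
    ∃ (κ : ℕ) (A : Finset ℕ), (∀ k ∈ A, k % 6 = 4 ∧ ∃ i < ν, c^[i + 1] n = k) ∧
      (n : ℝ) = 2 ^ ν / 6 ^ κ * ∏ k ∈ A, ((k : ℝ) - 1) / k := by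
  induction ν generalizing n with
  | zero => exact ⟨0, ∅, by simp, by simp_all⟩
  | succ ν ih =>
    have hmin' : ∀ i < ν, c^[i] (c n) ≠ 1 := fun i hi => hmin (i + 1) (by omega)
    obtain ⟨κ, A, hA, hcn⟩ := ih h hmin'
    have hA' : ∀ k ∈ A, k % 6 = 4 ∧ ∃ i < ν + 1, c^[i + 1] n = k := fun k hk =>
      (hA k hk).imp_right fun ⟨i, hi, hik⟩ => ⟨i + 1, by omega, hik⟩
    rcases Nat.even_or_odd n with heven | hodd
    · have hn : (n : ℝ) = 2 * c n := by
        rw [c, if_pos heven]; exact_mod_cast (Nat.mul_div_cancel' heven.two_dvd).symm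
      refine ⟨κ, A, hA', ?_⟩
      rw [hn, hcn, pow_succ]
      ring
    · have hcn3 : c n = 3 * n + 1 := by rw [c, if_neg (Nat.not_even_iff_odd.2 hodd)]
      have hnotin : c n ∉ A := fun hmem =>
        let ⟨_, i, hi, hic⟩ := hA _ hmem
        iterate_succ_ne_self_of_lt (x := c n) h hmin' hi hic
      refine ⟨κ + 1, insert (c n) A, ?_, ?_⟩
      · simp only [Finset.mem_insert, forall_eq_or_imp]
        exact ⟨⟨by have := Nat.odd_iff.1 hodd; omega, 0, by omega, rfl⟩, hA'⟩
      · have hc0 : (c n : ℝ) ≠ 0 := by rw [hcn3]; positivity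
        have hcn3' : (c n : ℝ) = 3 * n + 1 := by exact_mod_cast hcn3
        rw [Finset.prod_insert hnotin]
        calc (n : ℝ) = (c n - 1) / c n * c n / 3 := by field_simp; linarith
          _ = _ := by rw [hcn, pow_succ, pow_succ]; ring

/-- every `n ∈ L ν` lies in some slot `S ν κ`: `L ν` is covered by the slots. -/
theorem stmt_17 (ν : ℕ) (n : ℕ) (hn : n ∈ L ν) :
    ∃ κ : ℕ, σ₀ * 2 ^ ν / 6 ^ κ ≤ (n : ℝ) ∧ (n : ℝ) ≤ 2 ^ ν / 6 ^ κ := by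
  obtain ⟨κ, A, hA, hn_eq⟩ := exists_eq_two_pow_div_six_pow_mul_prod hn.2.1 hn.2.2
  have hA_orbit : ∀ k ∈ A, k ∈ R n ∧ k % 6 = 4 := fun k hk =>
    let ⟨h6, i, _, hi⟩ := hA k hk
    ⟨⟨i + 1, hi⟩, h6⟩
  have hσ₀_le_prod : σ₀ ≤ ∏ k ∈ A, ((k : ℝ) - 1) / k :=
    (σ₀_le_σ (Set.mem_iUnion.2 ⟨ν, hn⟩)).trans
      (σ_le_prod (R_finite_of_iterate_eq_one hn.2.1) hA_orbit)
  have hle_one : ∏ k ∈ A, ((k : ℝ) - 1) / k ≤ 1 :=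
    Finset.prod_le_one (fun k _ => (sub_one_div_self_mem_Icc k).1)
      fun k _ => (sub_one_div_self_mem_Icc k).2
  have hscale : (0 : ℝ) ≤ 2 ^ ν / 6 ^ κ := by positivity
  refine ⟨κ, ?_, ?_⟩ <;> rw [hn_eq]
  · rw [mul_div_assoc, mul_comm]
    exact mul_le_mul_of_nonneg_left hσ₀_le_prod hscale
  · exact mul_le_of_le_one_right hscale hle_one
end
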